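/- arXiv:2007.08023 — 2 statements merged into one kernel-verified Lean document; each statement's English description precedes it below -/
import Mathlib

section
/- The spectral radius of the (q,3)-path-block P₃^q is the unique root on (q, ∞) of the polynomial f_q(x) = (x−q)·((x−q)(x+2)+1) − 2q. -/
open scoped Classical
open Polynomial

noncomputable section

/-- Adjacency matrix of a simple graph, over `ℝ`. -/
def adjM {V : Type*} [Fintype V] (G : SimpleGraph V) : Matrix V V ℝ :=
  fun a b => if G.Adj a b then 1 else 0

/-- Characteristic polynomial `det (x•I - A(G))` of the adjacency matrix. -/
def charP {V : Type*} [Fintype V] [DecidableEq V] (G : SimpleGraph V) : Polynomial ℝ :=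
  (adjM G).charpoly

/-- Spectral radius: the largest real eigenvalue of the (symmetric, nonnegative)
adjacency matrix, i.e. the largest real root of the characteristic polynomial. -/
def specRad {V : Type*} [Fintype V] [DecidableEq V] (G : SimpleGraph V) : ℝ :=
  sSup {x : ℝ | (charP G).IsRoot x}

/-- The `(q,b)`-path-block: `b` copies of `K_{q+1}` arranged in a path, consecutive
blocks sharing exactly one vertex. Block `k` (for `k < b`) consists of the vertices
in the interval `[k*q, (k+1)*q]` of `Fin (b*q+1)`. -/
def pathBlock (q b : ℕ) : SimpleGraph (Fin (b * q + 1)) where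
  Adj i j := i ≠ j ∧ ∃ k < b, k * q ≤ (i : ℕ) ∧ (i : ℕ) ≤ (k + 1) * q ∧
      k * q ≤ (j : ℕ) ∧ (j : ℕ) ≤ (k + 1) * q
  symm := by
    constructor
    rintro i j ⟨hne, k, hk, h1, h2, h3, h4⟩
    exact ⟨hne.symm, k, hk, h3, h4, h1, h2⟩
  loopless := ⟨fun i h => h.1 rfl⟩

/-!
The vertices of `P₃^q` fall into five classes of twins (vertices with equal closed
neighbourhoods): the two cut vertices `q` and `2q`, and the remaining vertices of each block.
For an eigenvalue `x ≠ -1` twins carry equal eigenvector entries, so the eigenvalues `x > q` of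
the adjacency matrix are exactly the numbers `x` for which `x + 1` is an eigenvalue of the
`5 × 5` quotient matrix of this partition. For `x > q` the quotient eigenvector is forced to be
symmetric, and eliminating its entries leaves `f_q(x) = 0`. Since `f_q` is strictly increasing
on `[q, ∞)` with `f_q(q) < 0`, it has exactly one root there, which is therefore the largest
eigenvalue.
-/

open Finset
open scoped Matrix

theorem isRoot_charP_iff {V : Type*} [Fintype V] [DecidableEq V] (G : SimpleGraph V) (x : ℝ) :
    (charP G).IsRoot x ↔ ∃ v ≠ 0, adjM G *ᵥ v = x • v := by
  rw [_root_.charP, ← Matrix.charpoly_toLin', ← Module.End.hasEigenvalue_iff_isRoot_charpoly,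
    Module.End.hasEigenvalue_iff, Submodule.ne_bot_iff]
  simp only [Module.End.mem_eigenspace_iff, Matrix.toLin'_apply]
  exact ⟨fun ⟨v, hv, hne⟩ => ⟨v, hne, hv⟩, fun ⟨v, hne, hv⟩ => ⟨v, hv, hne⟩⟩

section BlowUp

variable {V W : Type*} [Fintype V] {G : SimpleGraph V} {π : V → W} {R : W → W → Prop}

theorem adjM_mulVec_add_self_apply (hG : ∀ i j, G.Adj i j ↔ i ≠ j ∧ R (π i) (π j))
    (hR : ∀ w, R w w) (v : V → ℝ) (i : V) :
    (adjM G *ᵥ v) i + v i = ∑ k with R (π i) (π k), v k := by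
  have hsplit : ∀ k, (if R (π i) (π k) then v k else 0) =
      adjM G i k * v k + if i = k then v k else 0 := by
    intro k
    by_cases hk : i = k
    · subst hk; simp [adjM, hR]
    · simp [adjM, hG, hk]
  rw [sum_filter, sum_congr rfl fun k _ => hsplit k, sum_add_distrib, sum_ite_eq]
  simp [Matrix.mulVec, dotProduct]

variable [Fintype W] [DecidableEq W]

/-- When `G` is the blow-up of a reflexive relation `R` (hypothesis `hG` below), the `(c, w)` entry
counts the closed neighbours over `w` of any vertex over `c`; hence the shift by `1` in
`exists_adjM_mulVec_eq_smul_iff`. -/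
def blowUpQuotient (π : V → W) (R : W → W → Prop) : Matrix W W ℝ :=
  fun c w => if R c w then (#{k | π k = w} : ℝ) else 0

theorem adjM_mulVec_comp_add (hG : ∀ i j, G.Adj i j ↔ i ≠ j ∧ R (π i) (π j))
    (hR : ∀ w, R w w) (u : W → ℝ) :
    adjM G *ᵥ (u ∘ π) + u ∘ π = (blowUpQuotient π R *ᵥ u) ∘ π := by
  ext i
  rw [Pi.add_apply, adjM_mulVec_add_self_apply hG hR, sum_filter]
  simp only [Function.comp_apply]
  rw [← sum_fiberwise' univ π fun w => if R (π i) w then u w else 0]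
  simp [Matrix.mulVec, dotProduct, blowUpQuotient, ite_mul]

theorem exists_adjM_mulVec_eq_smul_iff (hG : ∀ i j, G.Adj i j ↔ i ≠ j ∧ R (π i) (π j))
    (hR : ∀ w, R w w) (hπ : π.Surjective) {x : ℝ} (hx : x ≠ -1) :
    (∃ v ≠ 0, adjM G *ᵥ v = x • v) ↔ ∃ u ≠ 0, blowUpQuotient π R *ᵥ u = (x + 1) • u := by
  have hcomp := adjM_mulVec_comp_add hG hR
  constructor
  · rintro ⟨v, hv, hAv⟩
    have hsum : ∀ i, (x + 1) * v i = ∑ k with R (π i) (π k), v k := fun i => by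
      rw [← adjM_mulVec_add_self_apply hG hR, hAv, Pi.smul_apply, smul_eq_mul, add_one_mul]
    -- twins get equal entries because `x + 1 ≠ 0`
    have hfactor : v = (v ∘ Function.surjInv hπ) ∘ π := by
      ext i
      refine mul_left_cancel₀ (fun h => hx (eq_neg_of_add_eq_zero_left h)) ?_
      rw [Function.comp_apply, Function.comp_apply, hsum, hsum, Function.surjInv_eq hπ]
    refine ⟨v ∘ Function.surjInv hπ, fun h => hv (by rw [hfactor, h]; rfl), ?_⟩
    apply hπ.injective_comp_right
    change _ ∘ π = _ ∘ π
    rw [← hcomp, ← hfactor, hAv]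
    conv_lhs => rw [hfactor]
    ext i
    simp [add_mul]
  · rintro ⟨u, hu, hBu⟩
    refine ⟨u ∘ π, fun h => hu (hπ.injective_comp_right h), ?_⟩
    rw [← add_sub_cancel_right (adjM G *ᵥ (u ∘ π)) (u ∘ π), hcomp, hBu]
    ext i
    simp [add_mul]

end BlowUp

theorem card_filter_fin_le_and_lt (n a b : ℕ) (hb : b ≤ n) :
    #{i : Fin n | a ≤ i.val ∧ i.val < b} = b - a := by
  rw [card_filter, Fin.sum_univ_eq_sum_range (fun m => if a ≤ m ∧ m < b then 1 else 0),
    ← card_filter, ← Nat.card_Ico a b]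
  congr 1
  ext m
  simp only [mem_filter, mem_range, mem_Ico]
  omega

section PathBlock

variable {q : ℕ}

/-- Classes `1` and `3` are the cut vertices `q` and `2q`; classes `0`, `2`, `4` are the other
vertices of the first, middle and last block. -/
def pathBlockClass (q : ℕ) (i : Fin (3 * q + 1)) : Fin 5 :=
  if i.val < q then 0 else if i.val = q then 1 else if i.val < 2 * q then 2
  else if i.val = 2 * q then 3 else 4

def quotientBlock : ℕ → Finset (Fin 5)
  | 0 => {0, 1}
  | 1 => {1, 2, 3}
  | _ => {3, 4}

def quotientAdj (c w : Fin 5) : Prop :=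
  ∃ k < 3, c ∈ quotientBlock k ∧ w ∈ quotientBlock k

theorem pathBlockClass_mem_quotientBlock_iff (hq : 0 < q) {k : ℕ} (hk : k < 3)
    (i : Fin (3 * q + 1)) :
    pathBlockClass q i ∈ quotientBlock k ↔ k * q ≤ i.val ∧ i.val ≤ (k + 1) * q := by
  have := i.isLt
  interval_cases k <;> unfold pathBlockClass <;> split_ifs <;> simp [quotientBlock] <;> omega

theorem pathBlock_three_adj_iff (hq : 0 < q) (i j : Fin (3 * q + 1)) :
    (pathBlock q 3).Adj i j ↔ i ≠ j ∧ quotientAdj (pathBlockClass q i) (pathBlockClass q j) := by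
  refine and_congr_right fun _ => exists_congr fun k => and_congr_right fun hk => ?_
  rw [pathBlockClass_mem_quotientBlock_iff hq hk, pathBlockClass_mem_quotientBlock_iff hq hk,
    and_assoc]

theorem quotientAdj_refl : ∀ c, quotientAdj c c := by
  unfold quotientAdj
  decide

theorem pathBlockClass_surjective (hq : 2 ≤ q) : (pathBlockClass q).Surjective := by
  intro w
  have hrep : ∀ m (hm : m < 3 * q + 1), pathBlockClass q ⟨m, hm⟩ = w →
      ∃ i, pathBlockClass q i = w :=
    fun m hm h => ⟨_, h⟩
  fin_cases w <;>
    [apply hrep 0; apply hrep q; apply hrep (q + 1); apply hrep (2 * q); apply hrep (3 * q)] <;>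
    first | omega | (simp only [pathBlockClass]; split_ifs <;> first | omega | rfl)

theorem card_filter_pathBlockClass_eq (hq : 0 < q) (w : Fin 5) :
    (#{i | pathBlockClass q i = w} : ℝ) = ![(q : ℝ), 1, q - 1, 1, q] w := by
  have hcard : ∀ a b, a ≤ b → b ≤ 3 * q + 1 →
      (∀ i, pathBlockClass q i = w ↔ a ≤ i.val ∧ i.val < b) →
      (#{i | pathBlockClass q i = w} : ℝ) = (b : ℝ) - a := by
    intro a b hab hb hw
    simp_rw [hw]
    rw [card_filter_fin_le_and_lt _ _ _ hb, Nat.cast_sub hab]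
  fin_cases w <;>
    [rw [hcard 0 q]; rw [hcard q (q + 1)]; rw [hcard (q + 1) (2 * q)];
      rw [hcard (2 * q) (2 * q + 1)]; rw [hcard (2 * q + 1) (3 * q + 1)]]
  all_goals first
    | omega
    | (intro i; have := i.isLt; unfold pathBlockClass; split_ifs <;> simp <;> omega)
    | (push_cast; ring)

def pathBlockQuotient (p : ℝ) : Matrix (Fin 5) (Fin 5) ℝ :=
  !![p, 1, 0, 0, 0;
     p, 1, p - 1, 1, 0;
     0, 1, p - 1, 1, 0;
     0, 1, p - 1, 1, p;
     0, 0, 0, 1, p]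

theorem blowUpQuotient_pathBlockClass (hq : 0 < q) :
    blowUpQuotient (pathBlockClass q) quotientAdj = pathBlockQuotient q := by
  ext c w
  rw [blowUpQuotient, card_filter_pathBlockClass_eq hq]
  fin_cases c <;> fin_cases w <;>
    first
      | rw [if_pos (by unfold quotientAdj; decide)]
      | rw [if_neg (by unfold quotientAdj; decide)]
  all_goals simp [pathBlockQuotient]

end PathBlock

def pathBlockCubic (p x : ℝ) : ℝ := (x - p) * ((x - p) * (x + 2) + 1) - 2 * p

theorem pathBlockQuotient_mulVec_eq_smul_iff {p y : ℝ} {u : Fin 5 → ℝ} :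
    pathBlockQuotient p *ᵥ u = y • u ↔
      p * u 0 + u 1 = y * u 0 ∧
      p * u 0 + u 1 + (p - 1) * u 2 + u 3 = y * u 1 ∧
      u 1 + (p - 1) * u 2 + u 3 = y * u 2 ∧
      u 1 + (p - 1) * u 2 + u 3 + p * u 4 = y * u 3 ∧
      u 3 + p * u 4 = y * u 4 := by
  simp [funext_iff, Fin.forall_fin_succ, pathBlockQuotient, dotProduct, Fin.sum_univ_five,
    add_assoc]

theorem exists_pathBlockQuotient_mulVec_eq_smul_iff {p x : ℝ} (hp : 0 ≤ p) (hx : p < x) :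
    (∃ u ≠ 0, pathBlockQuotient p *ᵥ u = (x + 1) • u) ↔ pathBlockCubic p x = 0 := by
  simp only [pathBlockQuotient_mulVec_eq_smul_iff]
  constructor
  · rintro ⟨u, hu, e0, e1, e2, e3, e4⟩
    have hb : u 1 = (x - p + 1) * u 0 := by linear_combination e0
    have hd : u 3 = (x - p + 1) * u 4 := by linear_combination e4
    have hae : u 0 = u 4 := by
      have h : (u 0 - u 4) * ((x + 1) * (x - p + 1) - p) = 0 := by
        linear_combination e3 - e1 - (x + 1) * hb + (x + 1) * hd
      have hpos : 0 < (x + 1) * (x - p + 1) - p := by nlinarith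
      linarith [(mul_eq_zero.1 h).resolve_right hpos.ne']
    have hc : (x - p + 2) * u 2 = 2 * (x - p + 1) * u 0 := by
      linear_combination -e2 + hb + hd - (x - p + 1) * hae
    have hf : pathBlockCubic p x * u 0 = 0 := by
      unfold pathBlockCubic
      linear_combination -(x - p + 2) * e1 - (x - p + 2) * x * hb + (x - p + 2) * hd
        - (x - p + 2) * (x - p + 1) * hae + (p - 1) * hc
    refine (mul_eq_zero.1 hf).resolve_right fun ha => hu ?_
    have hc0 : u 2 = 0 := by
      have : (x - p + 2) * u 2 = 0 := by rw [hc, ha, mul_zero]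
      exact (mul_eq_zero.1 this).resolve_left (by linarith)
    ext i
    fin_cases i <;> simp [ha, hb, hc0, hd, ← hae]
  · intro hf
    -- the eigenvector forced by the first half, scaled by `x - p + 2` to clear a denominator
    refine ⟨![x - p + 2, (x - p + 1) * (x - p + 2), 2 * (x - p + 1), (x - p + 1) * (x - p + 2),
      x - p + 2], fun h => ?_, ?_⟩
    · have := congrFun h 0
      simp at this
      linarith
    · unfold pathBlockCubic at hf
      simp only [Fin.isValue, Matrix.cons_val_zero, Matrix.cons_val_one, Matrix.cons_val]
      exact ⟨by ring, by linear_combination -hf, by ring, by linear_combination -hf, by ring⟩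

theorem strictMonoOn_pathBlockCubic {p : ℝ} (hp : 0 ≤ p) :
    StrictMonoOn (pathBlockCubic p) (Set.Ici p) := by
  intro x hx y hy hxy
  simp only [Set.mem_Ici] at hx hy
  have hdiff : pathBlockCubic p y - pathBlockCubic p x = (y - x) *
      ((x - p) ^ 2 + (x - p) * (y - p) + (y - p) ^ 2 + (p + 2) * ((x - p) + (y - p)) + 1) := by
    unfold pathBlockCubic; ring
  have hfactor :
      0 < (x - p) ^ 2 + (x - p) * (y - p) + (y - p) ^ 2 + (p + 2) * ((x - p) + (y - p)) + 1 := by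
    have := mul_nonneg (sub_nonneg.2 hx) (sub_nonneg.2 hy)
    have := mul_nonneg (by linarith : 0 ≤ p + 2) (add_nonneg (sub_nonneg.2 hx) (sub_nonneg.2 hy))
    positivity
  nlinarith [mul_pos (sub_pos.2 hxy) hfactor]

theorem existsUnique_pathBlockCubic_eq_zero {p : ℝ} (hp : 0 < p) :
    ∃! x, p < x ∧ pathBlockCubic p x = 0 := by
  have hcont : ContinuousOn (pathBlockCubic p) (Set.Icc p (p + 2)) := by
    unfold pathBlockCubic; fun_prop
  obtain ⟨r, ⟨hpr, -⟩, hr⟩ := intermediate_value_Ioo (by linarith) hcont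
    (show (0 : ℝ) ∈ Set.Ioo (pathBlockCubic p p) (pathBlockCubic p (p + 2)) by
      constructor <;> unfold pathBlockCubic <;> nlinarith)
  refine ⟨r, ⟨hpr, hr⟩, fun x ⟨hpx, hx⟩ => ?_⟩
  exact (strictMonoOn_pathBlockCubic hp.le).injOn (Set.mem_Ici.2 hpx.le) (Set.mem_Ici.2 hpr.le)
    (hx.trans hr.symm)

theorem isRoot_charP_pathBlock_three_iff {q : ℕ} (hq : 2 ≤ q) {x : ℝ} (hx : (q : ℝ) < x) :
    (charP (pathBlock q 3)).IsRoot x ↔ pathBlockCubic q x = 0 := by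
  have hx' : x ≠ -1 := by linarith [(Nat.cast_nonneg q : (0 : ℝ) ≤ q)]
  rw [isRoot_charP_iff, exists_adjM_mulVec_eq_smul_iff (pathBlock_three_adj_iff (by omega))
    quotientAdj_refl (pathBlockClass_surjective hq) hx', blowUpQuotient_pathBlockClass (by omega),
    exists_pathBlockQuotient_mulVec_eq_smul_iff (Nat.cast_nonneg q) hx]

/-- The spectral radius of the `(q,3)`-path-block is the unique root on `(q, ∞)` of
`f_q(x) = (x-q)((x-q)(x+2)+1) - 2q`. -/
theorem specRad_pathBlock_three (q : ℕ) (hq : 2 ≤ q) :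
    (q : ℝ) < specRad (pathBlock q 3) ∧
    (specRad (pathBlock q 3) - q) *
        ((specRad (pathBlock q 3) - q) * (specRad (pathBlock q 3) + 2) + 1) - 2 * q = 0 ∧
    ∀ x : ℝ, (q : ℝ) < x → (x - q) * ((x - q) * (x + 2) + 1) - 2 * q = 0 →
      x = specRad (pathBlock q 3) := by
  obtain ⟨r, ⟨hqr, hr⟩, hunique⟩ := existsUnique_pathBlockCubic_eq_zero (p := q) (by positivity)
  have hgreatest : IsGreatest {x | (charP (pathBlock q 3)).IsRoot x} r := by
    refine ⟨(isRoot_charP_pathBlock_three_iff hq hqr).2 hr, fun x hx => le_of_not_gt fun hrx => ?_⟩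
    have hqx := hqr.trans hrx
    exact hrx.ne' (hunique x ⟨hqx, (isRoot_charP_pathBlock_three_iff hq hqx).1 hx⟩)
  rw [specRad, hgreatest.csSup_eq]
  exact ⟨hqr, hr, fun x hqx hx => hunique x ⟨hqx, hx⟩⟩
end
end

section
/- Let G₁ = G·_u^v H (coalescence identifying u ∈ V(G) with v ∈ V(H)) and G₂ = G·_u^w H. Then P_{G₂}(x) − P_{G₁}(x) = (P_G(x) − x·P_{G−u}(x))·(P_{H−w}(x) − P_{H−v}(x)). -/
open scoped Classical
open Polynomial

noncomputable section

/-- Vertex-deleted subgraph `G - v`. -/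
def del {V : Type*} (G : SimpleGraph V) (v : V) : SimpleGraph {u : V // u ≠ v} :=
  SimpleGraph.induce {u : V | u ≠ v} G

/-- Coalescence of `G` and `H` obtained by identifying `g ∈ V(G)` with `h ∈ V(H)`
(the vertex `Sum.inl g` plays the role of the identified vertex). -/
def coal {V W : Type*} (G : SimpleGraph V) (H : SimpleGraph W) (g : V) (h : W) :
    SimpleGraph (V ⊕ {w : W // w ≠ h}) where
  Adj x y :=
    match x, y with
    | Sum.inl a, Sum.inl b => G.Adj a b
    | Sum.inl a, Sum.inr b => a = g ∧ H.Adj h b.1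
    | Sum.inr a, Sum.inl b => b = g ∧ H.Adj h a.1
    | Sum.inr a, Sum.inr b => H.Adj a.1 b.1
  symm := by
    constructor
    rintro (a | a) (b | b) hxy
    exacts [G.adj_symm hxy, hxy, hxy, H.adj_symm hxy]
  loopless := by
    constructor
    rintro (a | a) hxy
    exacts [G.irrefl hxy, H.irrefl hxy]

/-!
Subtracting Schwenk's formula `P_{G·H} = P_G P_{H-h} + P_{G-g} P_H - x P_{G-g} P_{H-h}`
(the coalescence identifying `g` with `h`) for `h = v` from the one for `h = w` leaves the product.
Schwenk's formula is a Schur-complement computation over `ℝ(x)`: in the characteristic matrix of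
the coalescence the block `x - A(H - h)` is invertible, and the border joining it to `x - A(G)`
lives in row and column `g` only, so the Schur complement is `x - A(G)` minus `q` times the
`(g, g)` matrix unit, for a rational function `q`. Bordering `x - A(H - h)` by the vertex `h`
instead gives `P_H = P_{H-h} (x - q)`, which eliminates `q`.
-/

namespace Matrix

section CommRing

variable {R : Type*} [CommRing R] {n : Type*} [Fintype n] [DecidableEq n]

theorem adjugate_apply_self (A : Matrix n n R) (g : n) :
    A.adjugate g g = (A.submatrix ((↑) : {a // a ≠ g} → n) (↑)).det := by
  rw [adjugate_apply, ← det_submatrix_equiv_self (Equiv.sumCompl (· = g))]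
  have hblocks : (A.updateRow g (Pi.single g 1)).submatrix (Equiv.sumCompl (· = g))
      (Equiv.sumCompl (· = g)) = fromBlocks 1 0
        (of fun (i : {a // a ≠ g}) _ => A i g) (A.submatrix (↑) (↑)) := by
    ext (⟨i, hi⟩ | ⟨i, hi⟩) (⟨j, hj⟩ | ⟨j, hj⟩) <;> simp_all [updateRow_apply]
  rw [hblocks, det_fromBlocks_zero₁₂, det_one, one_mul]

theorem det_add_single_self (A : Matrix n n R) (g : n) (s : R) :
    (A + single g g s).det = A.det + s * (A.submatrix ((↑) : {a // a ≠ g} → n) (↑)).det := by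
  have hrow : A + single g g s = A.updateRow g (A g + s • Pi.single g 1) := by
    ext i j
    by_cases hi : i = g
    · subst hi
      simp [single_apply, Pi.single_apply, eq_comm]
    · simp [hi, single_apply_of_row_ne (Ne.symm hi)]
  rw [hrow, det_updateRow_add, updateRow_eq_self, det_updateRow_smul, ← adjugate_apply,
    adjugate_apply_self]

end CommRing

section Field

variable {K : Type*} [Field K] {m n : Type*} [Fintype m] [DecidableEq m] [Fintype n] [DecidableEq n]

theorem det_fromBlocks_vecMulVec_single (A : Matrix m m K) (D : Matrix n n K) (hD : IsUnit D.det)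
    (g : m) (b c : n → K) :
    (fromBlocks A (vecMulVec (Pi.single g 1) b) (vecMulVec c (Pi.single g 1)) D).det =
      D.det * (A.det - (b ᵥ* D⁻¹ ⬝ᵥ c) * (A.submatrix ((↑) : {a // a ≠ g} → m) (↑)).det) := by
  let := D.invertibleOfIsUnitDet hD
  have hschur : vecMulVec (Pi.single g 1) b * ⅟D * vecMulVec c (Pi.single g 1) =
      single g g (b ᵥ* D⁻¹ ⬝ᵥ c) := by
    rw [vecMulVec_mul, vecMulVec_mul_vecMulVec, vecMulVec_smul, ← single_eq_single_vecMulVec_single,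
      smul_single, smul_eq_mul, mul_one, invOf_eq_nonsing_inv]
  rw [det_fromBlocks₂₂, hschur, sub_eq_add_neg, single_neg, det_add_single_self]
  ring

theorem det_eq_det_submatrix_mul_sub (M : Matrix n n K) (g : n)
    (hM : IsUnit (M.submatrix ((↑) : {a // a ≠ g} → n) (↑)).det) :
    M.det = (M.submatrix ((↑) : {a // a ≠ g} → n) (↑)).det *
      (M g g - (fun j : {a // a ≠ g} => M g j) ᵥ* (M.submatrix ((↑) : {a // a ≠ g} → n) (↑))⁻¹ ⬝ᵥ
        (fun i : {a // a ≠ g} => M i g)) := by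
  let e : {a // a = g} ⊕ {a // a ≠ g} ≃ n := Equiv.sumCompl (· = g)
  let g' : {a // a = g} := ⟨g, rfl⟩
  have hblocks : M.submatrix e e = fromBlocks (of fun _ _ => M g g)
      (vecMulVec (Pi.single g' 1) fun j : {a // a ≠ g} => M g j)
      (vecMulVec (fun i : {a // a ≠ g} => M i g) (Pi.single g' 1))
      (M.submatrix ((↑) : {a // a ≠ g} → n) (↑)) := by
    ext (⟨i, rfl⟩ | ⟨i, hi⟩) (⟨j, rfl⟩ | ⟨j, hj⟩) <;> simp [e, g', vecMulVec_apply]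
  have : IsEmpty {x // x ≠ g'} := ⟨fun x => x.2 (Subsingleton.elim _ _)⟩
  rw [← det_submatrix_equiv_self e, hblocks, det_fromBlocks_vecMulVec_single _ _ hM]
  simp [det_unique]

end Field

end Matrix

section Graph

open Matrix

variable {V W : Type*} [Fintype V] [DecidableEq V] [Fintype W] [DecidableEq W]

/-- `x - A(G)` over `ℝ(x)`, where the characteristic matrices of all graphs are invertible. -/
def ratCharmatrix (G : SimpleGraph V) : Matrix V V (RatFunc ℝ) :=
  (charmatrix (adjM G)).map (algebraMap ℝ[X] (RatFunc ℝ))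

theorem ratCharmatrix_apply (G : SimpleGraph V) (a b : V) :
    ratCharmatrix G a b =
      (if a = b then algebraMap ℝ[X] (RatFunc ℝ) X else 0) - if G.Adj a b then 1 else 0 := by
  by_cases hab : a = b
  · subst hab
    simp [ratCharmatrix, adjM, charmatrix_apply_eq]
  · by_cases hadj : G.Adj a b <;> simp [ratCharmatrix, adjM, hab, hadj]

theorem det_ratCharmatrix (G : SimpleGraph V) :
    (ratCharmatrix G).det = algebraMap ℝ[X] (RatFunc ℝ) (charP G) :=
  (RingHom.map_det _ _).symm

theorem isUnit_det_ratCharmatrix (G : SimpleGraph V) : IsUnit (ratCharmatrix G).det := by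
  rw [det_ratCharmatrix, isUnit_iff_ne_zero]
  exact RatFunc.algebraMap_ne_zero (charpoly_monic (adjM G)).ne_zero

theorem ratCharmatrix_submatrix_ne (G : SimpleGraph V) (g : V) :
    (ratCharmatrix G).submatrix ((↑) : {a // a ≠ g} → V) (↑) = ratCharmatrix (del G g) := by
  ext a b
  simp [ratCharmatrix_apply, del, Subtype.ext_iff]

theorem ratCharmatrix_coal (G : SimpleGraph V) (H : SimpleGraph W) (g : V) (h : W) :
    ratCharmatrix (coal G H g h) = fromBlocks (ratCharmatrix G)
      (vecMulVec (Pi.single g 1) fun j : {b // b ≠ h} => ratCharmatrix H h j)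
      (vecMulVec (fun i : {b // b ≠ h} => ratCharmatrix H i h) (Pi.single g 1))
      (ratCharmatrix (del H h)) := by
  ext (a | ⟨a, ha⟩) (b | ⟨b, hb⟩)
  · simp [ratCharmatrix_apply, coal]
  · by_cases hag : a = g <;> simp [ratCharmatrix_apply, coal, vecMulVec_apply, hag, Ne.symm hb]
  · by_cases hbg : b = g <;> simp [ratCharmatrix_apply, coal, vecMulVec_apply, hbg, ha, H.adj_comm]
  · simp [ratCharmatrix_apply, coal, del, Subtype.ext_iff]

theorem charP_coal (G : SimpleGraph V) (H : SimpleGraph W) (g : V) (h : W) :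
    charP (coal G H g h) = charP G * charP (del H h) + charP (del G g) * charP H
      - X * charP (del G g) * charP (del H h) := by
  apply RatFunc.algebraMap_injective ℝ
  have hcoal := det_fromBlocks_vecMulVec_single (ratCharmatrix G) _
    (isUnit_det_ratCharmatrix (del H h)) g (fun j => ratCharmatrix H h j)
    (fun i => ratCharmatrix H i h)
  have hH := det_eq_det_submatrix_mul_sub (ratCharmatrix H) h
    (by simpa only [ratCharmatrix_submatrix_ne] using isUnit_det_ratCharmatrix (del H h))
  rw [← ratCharmatrix_coal, ratCharmatrix_submatrix_ne G g] at hcoal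
  rw [ratCharmatrix_submatrix_ne] at hH
  simp only [map_sub, map_add, map_mul, ← det_ratCharmatrix]
  rw [ratCharmatrix_apply, if_pos rfl, if_neg H.irrefl, sub_zero] at hH
  linear_combination hcoal - (ratCharmatrix (del G g)).det * hH

end Graph

/-- For the two coalescences `G₁ = G·_u^v H` and `G₂ = G·_u^w H`:
`P_{G₂} - P_{G₁} = (P_G - x·P_{G-u}) * (P_{H-w} - P_{H-v})`. -/
theorem coalescence_difference {V W : Type*} [Fintype V] [DecidableEq V]
    [Fintype W] [DecidableEq W] (G : SimpleGraph V) (H : SimpleGraph W)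
    (u : V) (v w : W) :
    charP (coal G H u w) - charP (coal G H u v) =
      (charP G - X * charP (del G u)) * (charP (del H w) - charP (del H v)) := by
  rw [charP_coal G H u w, charP_coal G H u v]
  ring
end
end
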